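/- arXiv:1605.04387 — 3 statements merged into one kernel-verified Lean document; each statement's English description precedes it below -/
import Mathlib

section
/- Let (x_n)_{n≥1} be a sequence of unit vectors in a Hilbert space H with Gram matrix Γ_{n,p} = ⟨x_n, x_p⟩. If the tail off-diagonal row sums tend to zero, i.e. lim_{N→∞} sup_{n≥N} Σ_{p≥N, p≠n} |Γ_{n,p}| = 0, then (x_n) is an asymptotically orthonormal sequence: there exists N₀ such that for all N ≥ N₀ there are constants c_N, C_N > 0 with c_N Σ_{n≥N}|a_n|² ≤ ‖Σ_{n≥N} a_n x_n‖² ≤ C_N Σ_{n≥N}|a_n|² for every finitely supported complex sequence (a_n), and c_N → 1, C_N → 1 as N → ∞. -/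
/-!
Expanding `‖∑ aₙ xₙ‖²` gives `∑ |aₙ|²` (the diagonal, since the `xₙ` are unit vectors) plus the
off-diagonal part `∑_{n ≠ p} āₙ aₚ Γₙₚ`. By `|aₙ aₚ| ≤ (|aₙ|² + |aₚ|²)/2` and the symmetry
`|Γₙₚ| = |Γₚₙ|` (Schur's test), the off-diagonal part is at most `ε_N ∑ |aₙ|²` when all indices are
`≥ N`. Hence `c_N = 1 - ε_N` and `C_N = 1 + ε_N` work as soon as `|ε_N| < 1`.
-/

open Filter

/-- `x` is an asymptotically orthonormal sequence (AOS). -/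
def IsAOS {H : Type*} [NormedAddCommGroup H] [InnerProductSpace ℂ H] (x : ℕ → H) : Prop :=
  ∃ (N₀ : ℕ) (c C : ℕ → ℝ),
    Tendsto c atTop (nhds 1) ∧ Tendsto C atTop (nhds 1) ∧
    ∀ N ≥ N₀, 0 < c N ∧ 0 < C N ∧
      ∀ (s : Finset ℕ) (a : ℕ → ℂ), (∀ n ∈ s, N ≤ n) →
        c N * ∑ n ∈ s, ‖a n‖ ^ 2 ≤ ‖∑ n ∈ s, a n • x n‖ ^ 2 ∧
        ‖∑ n ∈ s, a n • x n‖ ^ 2 ≤ C N * ∑ n ∈ s, ‖a n‖ ^ 2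

section SchurTest

variable {ι : Type*} [DecidableEq ι]

theorem Finset.sum_sum_erase_comm {M : Type*} [AddCommMonoid M] (s : Finset ι)
    (f : ι → ι → M) :
    ∑ n ∈ s, ∑ p ∈ s.erase n, f n p = ∑ p ∈ s, ∑ n ∈ s.erase p, f n p :=
  Finset.sum_comm' fun n p => by simp only [Finset.mem_erase]; tauto

theorem sum_sum_erase_mul_mul_le_of_row_sum_le (s : Finset ι) (b : ι → ℝ) (g : ι → ι → ℝ)
    (hg : ∀ n p, 0 ≤ g n p) (hsymm : ∀ n p, g n p = g p n) (ε : ℝ)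
    (hrow : ∀ n ∈ s, ∑ p ∈ s.erase n, g n p ≤ ε) :
    ∑ n ∈ s, ∑ p ∈ s.erase n, b n * b p * g n p ≤ ε * ∑ n ∈ s, b n ^ 2 := by
  calc ∑ n ∈ s, ∑ p ∈ s.erase n, b n * b p * g n p
      ≤ ∑ n ∈ s, ∑ p ∈ s.erase n, (b n ^ 2 / 2 * g n p + b p ^ 2 / 2 * g n p) := by
        gcongr with n _ p _
        nlinarith [sq_nonneg (b n - b p), hg n p]
    _ = ∑ n ∈ s, b n ^ 2 * ∑ p ∈ s.erase n, g n p := by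
        simp only [Finset.sum_add_distrib, Finset.mul_sum]
        rw [Finset.sum_sum_erase_comm s fun n p => b p ^ 2 / 2 * g n p]
        simp only [hsymm _ (_ : ι), ← Finset.sum_add_distrib]
        refine Finset.sum_congr rfl fun n _ => Finset.sum_congr rfl fun p _ => ?_
        ring
    _ ≤ ∑ n ∈ s, b n ^ 2 * ε := by
        gcongr with n hn
        exact hrow n hn
    _ = ε * ∑ n ∈ s, b n ^ 2 := by rw [← Finset.sum_mul, mul_comm]

end SchurTest

section GramMatrix

variable {𝕜 E ι : Type*} [RCLike 𝕜] [NormedAddCommGroup E] [InnerProductSpace 𝕜 E]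

open scoped InnerProductSpace ComplexConjugate

theorem inner_sum_smul_sum_smul_self (s : Finset ι) (a : ι → 𝕜) (x : ι → E) :
    ⟪∑ n ∈ s, a n • x n, ∑ n ∈ s, a n • x n⟫_𝕜
      = ∑ n ∈ s, ∑ p ∈ s, conj (a n) * a p * ⟪x n, x p⟫_𝕜 := by
  rw [sum_inner]
  simp only [inner_smul_left, inner_sum, inner_smul_right]
  exact Finset.sum_congr rfl fun n _ => Finset.sum_congr rfl fun p _ => by ring

theorem norm_sum_smul_sq_eq_of_norm_eq_one [DecidableEq ι] (s : Finset ι) (a : ι → 𝕜) {x : ι → E}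
    (hx : ∀ n ∈ s, ‖x n‖ = 1) :
    ‖∑ n ∈ s, a n • x n‖ ^ 2 = ∑ n ∈ s, ‖a n‖ ^ 2
      + RCLike.re (∑ n ∈ s, ∑ p ∈ s.erase n, conj (a n) * a p * ⟪x n, x p⟫_𝕜) := by
  have hdiag : ∀ n ∈ s, conj (a n) * a n * ⟪x n, x n⟫_𝕜 = (‖a n‖ ^ 2 : ℝ) := fun n hn => by
    rw [inner_self_eq_norm_sq_to_K, hx n hn, RCLike.conj_mul]
    simp
  rw [@norm_sq_eq_re_inner 𝕜, inner_sum_smul_sum_smul_self]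
  rw [Finset.sum_congr rfl fun n hn => (Finset.add_sum_erase s _ hn).symm,
    Finset.sum_add_distrib, Finset.sum_congr rfl hdiag, map_add]
  simp

theorem abs_norm_sum_smul_sq_sub_le_of_row_sum_le [DecidableEq ι] (s : Finset ι) (a : ι → 𝕜)
    {x : ι → E} (hx : ∀ n ∈ s, ‖x n‖ = 1) {ε : ℝ}
    (hrow : ∀ n ∈ s, ∑ p ∈ s.erase n, ‖⟪x n, x p⟫_𝕜‖ ≤ ε) :
    |‖∑ n ∈ s, a n • x n‖ ^ 2 - ∑ n ∈ s, ‖a n‖ ^ 2| ≤ ε * ∑ n ∈ s, ‖a n‖ ^ 2 := by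
  rw [norm_sum_smul_sq_eq_of_norm_eq_one s a hx, add_sub_cancel_left]
  calc _ ≤ ‖∑ n ∈ s, ∑ p ∈ s.erase n, conj (a n) * a p * ⟪x n, x p⟫_𝕜‖ :=
        RCLike.abs_re_le_norm _
    _ ≤ ∑ n ∈ s, ∑ p ∈ s.erase n, ‖conj (a n) * a p * ⟪x n, x p⟫_𝕜‖ :=
        (norm_sum_le _ _).trans (Finset.sum_le_sum fun n _ => norm_sum_le _ _)
    _ = ∑ n ∈ s, ∑ p ∈ s.erase n, ‖a n‖ * ‖a p‖ * ‖⟪x n, x p⟫_𝕜‖ := by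
        simp only [norm_mul, RCLike.norm_conj]
    _ ≤ ε * ∑ n ∈ s, ‖a n‖ ^ 2 :=
        sum_sum_erase_mul_mul_le_of_row_sum_le s _ _ (fun _ _ => norm_nonneg _)
          (fun _ _ => norm_inner_symm _ _) ε hrow

end GramMatrix

theorem isAOS_of_abs_norm_sum_smul_sq_sub_le {H : Type*} [NormedAddCommGroup H]
    [InnerProductSpace ℂ H] {x : ℕ → H} {ε : ℕ → ℝ} (hε : Tendsto ε atTop (nhds 0))
    (h : ∀ N (s : Finset ℕ) (a : ℕ → ℂ), (∀ n ∈ s, N ≤ n) →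
      |‖∑ n ∈ s, a n • x n‖ ^ 2 - ∑ n ∈ s, ‖a n‖ ^ 2| ≤ ε N * ∑ n ∈ s, ‖a n‖ ^ 2) :
    IsAOS x := by
  obtain ⟨N₀, hN₀⟩ := eventually_atTop.mp
    ((hε.eventually (gt_mem_nhds one_pos)).and (hε.eventually (lt_mem_nhds neg_one_lt_zero)))
  refine ⟨N₀, fun N => 1 - ε N, fun N => 1 + ε N, by simpa using tendsto_const_nhds.sub hε,
    by simpa using tendsto_const_nhds.add hε, fun N hN => ?_⟩
  obtain ⟨hlt, hgt⟩ := hN₀ N hN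
  refine ⟨by linarith, by linarith, fun s a hs => ?_⟩
  obtain ⟨hlower, hupper⟩ := abs_le.mp (h N s a hs)
  constructor <;> linarith

/-- If the tail off-diagonal row sums of the Gram matrix of a sequence of unit vectors tend
to `0`, then the sequence is an asymptotically orthonormal sequence. -/
theorem stmt3 {H : Type*} [NormedAddCommGroup H] [InnerProductSpace ℂ H]
    (x : ℕ → H) (hx : ∀ n, ‖x n‖ = 1)
    (ε : ℕ → ℝ) (hε : Tendsto ε atTop (nhds 0))
    (hΓ : ∀ N : ℕ, ∀ n ≥ N, ∀ s : Finset ℕ, (∀ p ∈ s, N ≤ p ∧ p ≠ n) →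
      ∑ p ∈ s, ‖(inner ℂ (x n) (x p) : ℂ)‖ ≤ ε N) :
    IsAOS x :=
  isAOS_of_abs_norm_sum_smul_sq_sub_le hε fun N s a hs =>
    abs_norm_sum_smul_sq_sub_le_of_row_sum_le s a (fun n _ => hx n) fun n hn =>
      hΓ N n (hs n hn) (s.erase n) fun p hp =>
        ⟨hs p (Finset.mem_of_mem_erase hp), Finset.ne_of_mem_erase hp⟩
end

section
/- Let b ∈ H^∞(ℂ₊) with ‖b‖_∞ ≤ 1, and λ_n, μ_n ∈ ℂ₊ with |λ_n − μ_n| ≤ ε_n Im λ_n where ε_n → 0. Then ‖k_{μ_n}^b‖_b / ‖k_{λ_n}^b‖_b → 1 as n → ∞, where ‖k_z^b‖_b² = (1−|b(z)|²)/(4π Im z). -/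
/-!
A Cayley map sending `0` to `λ` turns `b` into a self-map of the closed disc, and the Schwarz
lemma applied to `φ ∘ b`, with `φ` the disc automorphism swapping `b(λ)` and `0`, gives the
Schwarz–Pick inequality on `ℂ₊`: the pseudo-hyperbolic distance between `b(μ)` and `b(λ)` is at
most `|μ - λ| / |μ - conj λ| ≤ ε`. The identity
`|1 - conj a * u|² - |u - a|² = (1 - |a|²)(1 - |u|²)` converts a pseudo-hyperbolic distance
`ρ < 1` into `(1 - ρ)/(1 + ρ) ≤ (1 - |u|²)/(1 - |a|²) ≤ (1 + ρ)/(1 - ρ)`, so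
`(1 - |b(μₙ)|²)/(1 - |b(λₙ)|²) → 1`; and `Im μₙ / Im λₙ → 1` since `|Im μₙ - Im λₙ| ≤ εₙ Im λₙ`.
-/

open Filter Real Metric Set ComplexConjugate Topology

section Disc

variable {a u : ℂ}

lemma one_sub_sq_norm_pos {z : ℂ} : 0 < 1 - ‖z‖ ^ 2 ↔ ‖z‖ < 1 := by
  rw [sub_pos, sq_lt_one_iff₀ (norm_nonneg z)]

lemma sq_norm_one_sub_conj_mul_sub_sq_norm_sub (a u : ℂ) :
    ‖1 - conj a * u‖ ^ 2 - ‖u - a‖ ^ 2 = (1 - ‖a‖ ^ 2) * (1 - ‖u‖ ^ 2) := by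
  simp only [Complex.sq_norm, Complex.normSq_apply, Complex.sub_re, Complex.sub_im,
    Complex.mul_re, Complex.mul_im, Complex.conj_re, Complex.conj_im, Complex.one_re,
    Complex.one_im]
  ring

lemma one_sub_conj_mul_ne_zero (ha : ‖a‖ < 1) (hu : ‖u‖ ≤ 1) : 1 - conj a * u ≠ 0 := by
  have : ‖conj a * u‖ < 1 := by
    rw [norm_mul, Complex.norm_conj]
    nlinarith [norm_nonneg a, norm_nonneg u]
  intro h
  rw [← sub_eq_zero.mp h, norm_one] at this
  exact this.false

lemma norm_sub_le_norm_one_sub_conj_mul (ha : ‖a‖ ≤ 1) (hu : ‖u‖ ≤ 1) :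
    ‖u - a‖ ≤ ‖1 - conj a * u‖ := by
  have h := sq_norm_one_sub_conj_mul_sub_sq_norm_sub a u
  have : 0 ≤ (1 - ‖a‖ ^ 2) * (1 - ‖u‖ ^ 2) := by
    apply mul_nonneg <;> nlinarith [norm_nonneg a, norm_nonneg u]
  exact (pow_le_pow_iff_left₀ (norm_nonneg _) (norm_nonneg _) two_ne_zero).mp (by linarith)

lemma one_sub_mul_one_sub_sq_norm_le {ρ : ℝ} (ha : ‖a‖ < 1) (hρ₀ : 0 ≤ ρ) (hρ : ρ ≤ 1)
    (h : ‖u - a‖ ≤ ρ * ‖1 - conj a * u‖) :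
    (1 - ρ) * (1 - ‖a‖ ^ 2) ≤ (1 + ρ) * (1 - ‖u‖ ^ 2) := by
  set D := ‖1 - conj a * u‖
  set d := ‖u - a‖
  have hid := sq_norm_one_sub_conj_mul_sub_sq_norm_sub a u
  have ha' := one_sub_sq_norm_pos.mpr ha
  have htri : 1 - ‖a‖ ^ 2 ≤ D + d := by
    have e : ((1 - ‖a‖ ^ 2 : ℝ) : ℂ) = (1 - conj a * u) + conj a * (u - a) := by
      push_cast
      rw [← Complex.mul_conj', mul_comm]
      ring
    calc 1 - ‖a‖ ^ 2 = ‖((1 - ‖a‖ ^ 2 : ℝ) : ℂ)‖ := by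
          rw [Complex.norm_real, Real.norm_of_nonneg ha'.le]
      _ ≤ D + ‖a‖ * d := by
          rw [e]
          refine (norm_add_le _ _).trans_eq ?_
          rw [norm_mul, Complex.norm_conj]
      _ ≤ D + d := by nlinarith [norm_nonneg (u - a)]
  have hD₀ : 0 ≤ D := norm_nonneg _
  have hD : 1 - ‖a‖ ^ 2 ≤ (1 + ρ) * D := by linarith
  have hu : (1 - ρ) * D ≤ 1 - ‖u‖ ^ 2 := by
    have hgap : (1 - ρ) * D ≤ D - d := by linarith
    have hprod : (1 - ρ) * D * (1 - ‖a‖ ^ 2) ≤ (D - d) * (D + d) :=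
      mul_le_mul hgap htri ha'.le (by nlinarith [mul_nonneg (sub_nonneg.2 hρ) hD₀])
    nlinarith
  nlinarith

/-- Schwarz–Pick at the origin. -/
lemma norm_sub_le_norm_mul_of_mapsTo_ball {f : ℂ → ℂ} (hd : DifferentiableOn ℂ f (ball 0 1))
    (hmaps : MapsTo f (ball 0 1) (closedBall 0 1)) (h0 : ‖f 0‖ < 1) {w : ℂ} (hw : ‖w‖ < 1) :
    ‖f w - f 0‖ ≤ ‖w‖ * ‖1 - conj (f 0) * f w‖ := by
  have hf : ∀ z ∈ ball (0 : ℂ) 1, ‖f z‖ ≤ 1 := fun z hz => mem_closedBall_zero_iff.mp (hmaps hz)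
  have hden : ∀ z ∈ ball (0 : ℂ) 1, 1 - conj (f 0) * f z ≠ 0 :=
    fun z hz => one_sub_conj_mul_ne_zero h0 (hf z hz)
  set g : ℂ → ℂ := fun z => (f z - f 0) / (1 - conj (f 0) * f z)
  have hg : DifferentiableOn ℂ g (ball 0 1) :=
    (hd.sub_const _).div ((differentiableOn_const 1).sub (hd.const_mul _)) hden
  have hgmaps : MapsTo g (ball 0 1) (closedBall 0 1) := fun z hz => by
    rw [mem_closedBall_zero_iff, norm_div, div_le_one (norm_pos_iff.mpr (hden z hz))]
    exact norm_sub_le_norm_one_sub_conj_mul h0.le (hf z hz)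
  have hwmem : w ∈ ball (0 : ℂ) 1 := mem_ball_zero_iff.mpr hw
  have := Complex.norm_le_norm_of_mapsTo_ball hg hgmaps (by simp [g]) hw
  rwa [norm_div, div_le_iff₀ (norm_pos_iff.mpr (hden w hwmem))] at this

end Disc

section HalfPlane

variable {l m w : ℂ}

noncomputable def discToHalfPlane (l w : ℂ) : ℂ := (l - conj l * w) / (1 - w)

lemma discToHalfPlane_zero (l : ℂ) : discToHalfPlane l 0 = l := by
  simp [discToHalfPlane]

lemma one_sub_ne_zero_of_norm_lt_one (hw : ‖w‖ < 1) : 1 - w ≠ 0 := by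
  intro h
  rw [← sub_eq_zero.mp h, norm_one] at hw
  exact hw.false

lemma differentiableOn_discToHalfPlane (l : ℂ) :
    DifferentiableOn ℂ (discToHalfPlane l) (ball 0 1) :=
  ((differentiableOn_const l).sub (differentiableOn_id.const_mul _)).div
    ((differentiableOn_const 1).sub differentiableOn_id)
    fun _ hw => one_sub_ne_zero_of_norm_lt_one (mem_ball_zero_iff.mp hw)

lemma im_discToHalfPlane (l w : ℂ) :
    (discToHalfPlane l w).im = l.im * (1 - ‖w‖ ^ 2) / ‖1 - w‖ ^ 2 := by
  rw [discToHalfPlane, Complex.div_im, div_sub_div_same, Complex.sq_norm, Complex.sq_norm]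
  congr 1
  simp only [Complex.normSq_apply, Complex.sub_re, Complex.sub_im, Complex.mul_re,
    Complex.mul_im, Complex.conj_re, Complex.conj_im, Complex.one_re, Complex.one_im]
  ring

lemma im_discToHalfPlane_pos (hl : 0 < l.im) (hw : ‖w‖ < 1) : 0 < (discToHalfPlane l w).im := by
  rw [im_discToHalfPlane]
  have : 0 < ‖1 - w‖ := norm_pos_iff.mpr (one_sub_ne_zero_of_norm_lt_one hw)
  have : 0 < 1 - ‖w‖ ^ 2 := one_sub_sq_norm_pos.mpr hw
  positivity

lemma sub_conj_ne_zero (hl : 0 < l.im) (hm : 0 < m.im) : m - conj l ≠ 0 := by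
  intro h
  have := congrArg Complex.im h
  simp only [Complex.sub_im, Complex.conj_im, Complex.zero_im] at this
  linarith

lemma norm_sub_lt_norm_sub_conj (hl : 0 < l.im) (hm : 0 < m.im) : ‖m - l‖ < ‖m - conj l‖ := by
  have h : ‖m - conj l‖ ^ 2 - ‖m - l‖ ^ 2 = 4 * l.im * m.im := by
    simp only [Complex.sq_norm, Complex.normSq_apply, Complex.sub_re, Complex.sub_im,
      Complex.conj_re, Complex.conj_im]
    ring
  exact (pow_lt_pow_iff_left₀ (norm_nonneg _) (norm_nonneg _) two_ne_zero).mp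
    (by nlinarith)

lemma discToHalfPlane_sub_div_sub_conj (hl : 0 < l.im) (hm : 0 < m.im) :
    discToHalfPlane l ((m - l) / (m - conj l)) = m := by
  have h₁ := sub_conj_ne_zero hl hm
  have h₂ := sub_conj_ne_zero hl hl
  rw [discToHalfPlane, div_eq_iff, one_sub_div h₁]
  · field_simp
    ring
  · rw [one_sub_div h₁]
    exact div_ne_zero (by simpa using h₂) h₁

/-- Schwarz–Pick on the upper half-plane. -/
theorem norm_sub_mul_le_of_upperHalfPlane {b : ℂ → ℂ}
    (hb_holo : DifferentiableOn ℂ b {z : ℂ | 0 < z.im}) (hb_bdd : ∀ z : ℂ, 0 < z.im → ‖b z‖ ≤ 1)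
    (hl : 0 < l.im) (hm : 0 < m.im) (hbl : ‖b l‖ < 1) :
    ‖b m - b l‖ * ‖m - conj l‖ ≤ ‖m - l‖ * ‖1 - conj (b l) * b m‖ := by
  have hT : MapsTo (discToHalfPlane l) (ball 0 1) {z : ℂ | 0 < z.im} :=
    fun w hw => im_discToHalfPlane_pos hl (mem_ball_zero_iff.mp hw)
  have hw₀ : ‖(m - l) / (m - conj l)‖ < 1 := by
    rw [norm_div, div_lt_one (norm_pos_iff.mpr (sub_conj_ne_zero hl hm))]
    exact norm_sub_lt_norm_sub_conj hl hm
  have h := norm_sub_le_norm_mul_of_mapsTo_ball (f := b ∘ discToHalfPlane l)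
    (hb_holo.comp (differentiableOn_discToHalfPlane l) hT)
    (fun w hw => mem_closedBall_zero_iff.mpr (hb_bdd _ (hT hw)))
    (by simpa [discToHalfPlane_zero] using hbl) hw₀
  simp only [Function.comp_apply, discToHalfPlane_zero,
    discToHalfPlane_sub_div_sub_conj hl hm, norm_div] at h
  rwa [div_mul_eq_mul_div, le_div_iff₀ (norm_pos_iff.mpr (sub_conj_ne_zero hl hm))] at h

end HalfPlane

lemma tendsto_one_sub_sq_div_one_sub_sq {a u : ℕ → ℂ} {ρ : ℕ → ℝ} (ha : ∀ n, ‖a n‖ < 1)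
    (hρ₀ : ∀ n, 0 ≤ ρ n) (hρ : Tendsto ρ atTop (𝓝 0))
    (h : ∀ n, ‖u n - a n‖ ≤ ρ n * ‖1 - conj (a n) * u n‖) :
    Tendsto (fun n => (1 - ‖u n‖ ^ 2) / (1 - ‖a n‖ ^ 2)) atTop (𝓝 1) := by
  have hlo : Tendsto (fun n => (1 - ρ n) / (1 + ρ n)) atTop (𝓝 1) := by
    have h := ((tendsto_const_nhds.sub hρ).div (tendsto_const_nhds.add hρ) (by norm_num) :
      Tendsto (fun n => (1 - ρ n) / (1 + ρ n)) atTop (𝓝 ((1 - 0) / (1 + 0))))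
    rwa [sub_zero, add_zero, div_one] at h
  have hhi : Tendsto (fun n => (1 + ρ n) / (1 - ρ n)) atTop (𝓝 1) := by
    simpa using hlo.inv₀ one_ne_zero
  refine tendsto_of_tendsto_of_tendsto_of_le_of_le' hlo hhi ?_ ?_ <;>
    filter_upwards [hρ.eventually_lt_const one_pos] with n hρ₁
  all_goals
    have ha' := one_sub_sq_norm_pos.mpr (ha n)
    have hau := one_sub_mul_one_sub_sq_norm_le (ha n) (hρ₀ n) hρ₁.le (h n)
  · rw [div_le_div_iff₀ (by linarith [hρ₀ n]) ha']
    linarith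
  · have hu : ‖u n‖ < 1 := one_sub_sq_norm_pos.mp (by nlinarith [hρ₀ n])
    have hua : ‖a n - u n‖ ≤ ρ n * ‖1 - conj (u n) * a n‖ := by
      have hconj : 1 - conj (u n) * a n = conj (1 - conj (a n) * u n) := by
        simp [mul_comm]
      rw [norm_sub_rev, hconj, Complex.norm_conj]
      exact h n
    rw [div_le_div_iff₀ ha' (by linarith)]
    linarith [one_sub_mul_one_sub_sq_norm_le hu (hρ₀ n) hρ₁.le hua]

lemma tendsto_im_div_im {lam mu : ℕ → ℂ} {ε : ℕ → ℝ} (hlam : ∀ n, 0 < (lam n).im)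
    (hε : Tendsto ε atTop (𝓝 0)) (hclose : ∀ n, ‖lam n - mu n‖ ≤ ε n * (lam n).im) :
    Tendsto (fun n => (mu n).im / (lam n).im) atTop (𝓝 1) := by
  rw [← tendsto_sub_nhds_zero_iff]
  refine squeeze_zero_norm (fun n => ?_) hε
  have hl := hlam n
  rw [div_sub_one hl.ne', norm_div, Real.norm_of_nonneg hl.le, div_le_iff₀ hl, Real.norm_eq_abs,
    abs_sub_comm, ← Complex.sub_im]
  exact (Complex.abs_im_le_norm _).trans (hclose n)

lemma norm_sub_le_mul_of_norm_sub_le_mul_im {b : ℂ → ℂ} {l m : ℂ} {ε : ℝ}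
    (hb_holo : DifferentiableOn ℂ b {z : ℂ | 0 < z.im}) (hb_bdd : ∀ z : ℂ, 0 < z.im → ‖b z‖ ≤ 1)
    (hl : 0 < l.im) (hm : 0 < m.im) (hbl : ‖b l‖ < 1) (hε : 0 ≤ ε)
    (hclose : ‖l - m‖ ≤ ε * l.im) :
    ‖b m - b l‖ ≤ ε * ‖1 - conj (b l) * b m‖ := by
  have hpos : 0 < ‖m - conj l‖ := norm_pos_iff.mpr (sub_conj_ne_zero hl hm)
  have him : l.im ≤ ‖m - conj l‖ := by
    refine le_trans ?_ (Complex.abs_im_le_norm _)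
    simp only [Complex.sub_im, Complex.conj_im]
    rw [abs_of_pos (by linarith)]
    linarith
  refine le_of_mul_le_mul_right ?_ hpos
  calc ‖b m - b l‖ * ‖m - conj l‖ ≤ ‖m - l‖ * ‖1 - conj (b l) * b m‖ :=
        norm_sub_mul_le_of_upperHalfPlane hb_holo hb_bdd hl hm hbl
    _ ≤ ε * ‖m - conj l‖ * ‖1 - conj (b l) * b m‖ := by
        gcongr
        rw [norm_sub_rev]
        exact hclose.trans (by gcongr)
    _ = ε * ‖1 - conj (b l) * b m‖ * ‖m - conj l‖ := by ring

/-- If `b` is in the unit ball of `H^∞(ℂ₊)` and `|λ_n − μ_n| ≤ ε_n Im λ_n` with `ε_n → 0`,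
then `‖k_{μ_n}^b‖_b / ‖k_{λ_n}^b‖_b → 1`, where `‖k_z^b‖_b² = (1−|b(z)|²)/(4π Im z)`. -/
theorem stmt12 (b : ℂ → ℂ)
    (hb_holo : DifferentiableOn ℂ b {z : ℂ | 0 < z.im})
    (hb_bdd : ∀ z : ℂ, 0 < z.im → ‖b z‖ ≤ 1)
    (lam mu : ℕ → ℂ) (hlam : ∀ n, 0 < (lam n).im) (hmu : ∀ n, 0 < (mu n).im)
    (hblam : ∀ n, ‖b (lam n)‖ < 1)
    (ε : ℕ → ℝ) (hεpos : ∀ n, 0 < ε n) (hε : Tendsto ε atTop (nhds 0))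
    (hclose : ∀ n, ‖lam n - mu n‖ ≤ ε n * (lam n).im) :
    Tendsto (fun n =>
      Real.sqrt ((1 - ‖b (mu n)‖ ^ 2) / (4 * π * (mu n).im)) /
      Real.sqrt ((1 - ‖b (lam n)‖ ^ 2) / (4 * π * (lam n).im)))
      atTop (nhds 1) := by
  have hpick (n : ℕ) : ‖b (mu n) - b (lam n)‖ ≤ ε n * ‖1 - conj (b (lam n)) * b (mu n)‖ :=
    norm_sub_le_mul_of_norm_sub_le_mul_im hb_holo hb_bdd (hlam n) (hmu n) (hblam n)
      (hεpos n).le (hclose n)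
  have hb := tendsto_one_sub_sq_div_one_sub_sq hblam (fun n => (hεpos n).le) hε hpick
  have him := tendsto_im_div_im hlam hε hclose
  have hlim := (hb.div him one_ne_zero).sqrt
  rw [div_one, Real.sqrt_one] at hlim
  refine hlim.congr fun n => ?_
  have hB : 0 ≤ (1 - ‖b (lam n)‖ ^ 2) / (4 * π * (lam n).im) :=
    div_nonneg (one_sub_sq_norm_pos.mpr (hblam n)).le (by positivity [hlam n])
  rw [← Real.sqrt_div' _ hB]
  congr 1
  rw [Pi.div_apply]
  field_simp
end

section
/- Let (λ_n)_{n≥1} ⊂ ℂ be a sequence with sup_n |Im λ_n| < ∞ and |λ_{n+1}/λ_n| > q for some q > 1 and all n. Then for every a > 0 the normalized exponentials χ^a_{λ_n}(t) = (2 Im λ_n/(1 − e^{−2a Im λ_n}))^{1/2} e^{iλ_n t} form an asymptotically orthonormal sequence in L²(0,a): there exists N₀ such that for all N ≥ N₀ there are c_N, C_N > 0 with c_N Σ_{n≥N}|a_n|² ≤ ‖Σ_{n≥N} a_n χ^a_{λ_n}‖² ≤ C_N Σ_{n≥N}|a_n|² for finitely supported (a_n), and c_N, C_N → 1. -/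
/-!
The Gram matrix `G n m = ⟨χ_{λ_n}, χ_{λ_m}⟩` has unit diagonal, and since `Im λ` is bounded its
off-diagonal entries are `O(1 / |λ_n - conj λ_m|)`. Lacunarity gives
`|λ_n - conj λ_m| ≥ |λ_n| - |λ_m| ≥ (1 - 1/q) q^{|n-m|} |λ_N|` for distinct `n, m ≥ N`, so the
off-diagonal row sums of `G` restricted to indices `≥ N` are `ε_N = O(1 / |λ_N|) → 0`. By the
Schur test the quadratic form `∑ u_n conj u_m G n m` is then within `ε_N ∑ |u_n|²` of
`∑ |u_n|²`, and one takes `c_N = 1 - ε_N`, `C_N = 1 + ε_N`.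
-/

open Filter MeasureTheory

/-- Normalizing constant making `e^{iλt}` a unit vector in `L²(0,a)`; when `Im λ = 0`
it is interpreted as `√(1/a)`. -/
noncomputable def normFac (a : ℝ) (lam : ℂ) : ℝ :=
  if lam.im = 0 then Real.sqrt (1 / a)
  else Real.sqrt (2 * lam.im / (1 - Real.exp (-2 * a * lam.im)))

open Complex Finset ComplexConjugate

namespace Real

lemma div_one_sub_exp_neg_nonneg (x : ℝ) : 0 ≤ x / (1 - exp (-x)) := by
  rcases le_total 0 x with hx | hx
  · exact div_nonneg hx (by simpa using exp_le_one_iff.mpr (neg_nonpos.mpr hx))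
  · exact div_nonneg_of_nonpos hx (by simpa using one_le_exp_iff.mpr (neg_nonneg.mpr hx))

lemma div_one_sub_exp_neg_le_exp_abs {x : ℝ} (hx : x ≠ 0) : x / (1 - exp (-x)) ≤ exp |x| := by
  rcases hx.lt_or_gt with hx | hx
  · have h1 : 1 < exp (-x) := one_lt_exp_iff.mpr (by linarith)
    rw [div_le_iff_of_neg (by linarith), abs_of_neg hx]
    nlinarith [add_one_le_exp (-x)]
  · have h1 : exp (-x) < 1 := exp_lt_one_iff.mpr (by linarith)
    rw [div_le_iff₀ (by linarith), abs_of_pos hx, mul_sub, mul_one, ← exp_add, add_neg_cancel,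
      exp_zero]
    linarith [add_one_le_exp x]

end Real

lemma integral_cexp_mul_Ioo {a : ℝ} (ha : 0 ≤ a) {c : ℂ} (hc : c ≠ 0) :
    ∫ t in Set.Ioo 0 a, exp (c * t) = (exp (c * a) - 1) / c := by
  rw [← integral_Ioc_eq_integral_Ioo, ← intervalIntegral.integral_of_le ha,
    integral_exp_mul_complex hc]
  simp

lemma norm_integral_cexp_mul_Ioo_le {a : ℝ} (ha : 0 ≤ a) {c : ℂ} (hc : c ≠ 0) :
    ‖∫ t in Set.Ioo 0 a, exp (c * t)‖ ≤ (Real.exp (c.re * a) + 1) / ‖c‖ := by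
  rw [integral_cexp_mul_Ioo ha hc, norm_div]
  gcongr
  refine (norm_sub_le _ _).trans ?_
  simp [Complex.norm_exp]

lemma normFac_nonneg (a : ℝ) (l : ℂ) : 0 ≤ normFac a l := by
  unfold normFac; split_ifs <;> exact Real.sqrt_nonneg _

lemma normFac_eq_of_im_ne_zero {a : ℝ} (ha : 0 < a) {l : ℂ} (hl : l.im ≠ 0) :
    normFac a l = √((2 * a * l.im) / (1 - Real.exp (-(2 * a * l.im))) / a) := by
  rw [normFac, if_neg hl]
  congr 1
  field_simp

lemma normFac_le {a : ℝ} (ha : 0 < a) {l : ℂ} {M : ℝ} (hM : |l.im| ≤ M) :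
    normFac a l ≤ √(Real.exp (2 * a * M) / a) := by
  have hexp : Real.exp (2 * a * |l.im|) ≤ Real.exp (2 * a * M) := by gcongr
  by_cases hl : l.im = 0
  · rw [normFac, if_pos hl]
    gcongr
    exact Real.one_le_exp (by nlinarith [abs_nonneg l.im])
  · rw [normFac_eq_of_im_ne_zero ha hl]
    gcongr
    refine (Real.div_one_sub_exp_neg_le_exp_abs (by positivity)).trans ?_
    rwa [abs_mul, abs_of_pos (by positivity : 0 < 2 * a)]

noncomputable def normExp (a : ℝ) (l : ℂ) (t : ℝ) : ℂ := normFac a l * exp (I * l * t)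

noncomputable def expGram (a : ℝ) (l m : ℂ) : ℂ :=
  ∫ t in Set.Ioo 0 a, normExp a l t * conj (normExp a m t)

lemma continuous_normExp (a : ℝ) (l : ℂ) : Continuous (normExp a l) := by
  unfold normExp; fun_prop

lemma expGram_eq (a : ℝ) (l m : ℂ) :
    expGram a l m =
      (normFac a l * normFac a m : ℝ) * ∫ t in Set.Ioo 0 a, exp (I * (l - conj m) * t) := by
  rw [expGram, ← integral_const_mul]
  congr 1 with t
  simp only [normExp, map_mul, conj_ofReal, ← exp_conj, conj_I]
  rw [ofReal_mul, mul_mul_mul_comm, ← exp_add]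
  ring_nf

lemma expGram_comm (a : ℝ) (l m : ℂ) : expGram a m l = conj (expGram a l m) := by
  rw [expGram, expGram, ← integral_conj]
  simp only [map_mul, conj_conj, mul_comm]

lemma expGram_self {a : ℝ} (ha : 0 < a) (l : ℂ) : expGram a l l = 1 := by
  have hc : I * (l - conj l) = ((-2 * l.im : ℝ) : ℂ) := by
    rw [sub_conj]; push_cast; linear_combination (2 * (l.im : ℂ)) * I_sq
  rw [expGram_eq, hc]
  by_cases hl : l.im = 0
  · have hsq : normFac a l * normFac a l = 1 / a := by
      rw [normFac, if_pos hl, Real.mul_self_sqrt (by positivity)]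
    rw [hsq, hl]
    simp [ha.le, ha.ne']
  · have hc0 : ((-2 * l.im : ℝ) : ℂ) ≠ 0 := ofReal_ne_zero.mpr (by simpa using hl)
    set x := 2 * a * l.im
    have hx : x ≠ 0 := by positivity
    have hsq : normFac a l * normFac a l = x / (1 - Real.exp (-x)) / a := by
      rw [normFac_eq_of_im_ne_zero ha hl,
        Real.mul_self_sqrt (div_nonneg (Real.div_one_sub_exp_neg_nonneg _) ha.le)]
    rw [integral_cexp_mul_Ioo ha.le hc0, hsq, ← ofReal_mul, ← ofReal_exp]
    have hreal :
        x / (1 - Real.exp (-x)) / a * ((Real.exp (-2 * l.im * a) - 1) / (-2 * l.im)) = 1 := by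
      have h1 : 1 - Real.exp (-x) ≠ 0 := by
        rw [sub_ne_zero, ne_comm, Ne, Real.exp_eq_one_iff, neg_eq_zero]; exact hx
      rw [show -2 * l.im * a = -x by ring]
      field_simp
      ring
    exact_mod_cast hreal

lemma integrableOn_normExp_mul_conj (a : ℝ) (l m : ℂ) :
    IntegrableOn (fun t => normExp a l t * conj (normExp a m t)) (Set.Ioo 0 a) :=
  ((continuous_normExp a l).mul
    (continuous_conj.comp (continuous_normExp a m))).integrableOn_Icc.mono_set
      Set.Ioo_subset_Icc_self

lemma norm_expGram_le {a M : ℝ} (ha : 0 < a) {l m : ℂ} (hl : |l.im| ≤ M) (hm : |m.im| ≤ M)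
    (hne : l - conj m ≠ 0) :
    ‖expGram a l m‖ ≤ Real.exp (2 * a * M) / a * (Real.exp (2 * a * M) + 1) / ‖l - conj m‖ := by
  have hc : I * (l - conj m) ≠ 0 := mul_ne_zero I_ne_zero hne
  have hfac : normFac a l * normFac a m ≤ Real.exp (2 * a * M) / a := by
    calc normFac a l * normFac a m
        ≤ √(Real.exp (2 * a * M) / a) * √(Real.exp (2 * a * M) / a) := by
          gcongr
          · exact normFac_nonneg a m
          · exact normFac_le ha hl
          · exact normFac_le ha hm
      _ = Real.exp (2 * a * M) / a := Real.mul_self_sqrt (by positivity)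
  have hre : (I * (l - conj m)).re * a ≤ 2 * a * M := by
    simp only [mul_re, I_re, I_im, sub_re, sub_im, conj_re, conj_im]
    nlinarith [abs_le.mp hl, abs_le.mp hm]
  rw [expGram_eq, norm_mul, norm_real, Real.norm_of_nonneg
    (mul_nonneg (normFac_nonneg a l) (normFac_nonneg a m)), mul_div_assoc]
  refine mul_le_mul hfac ((norm_integral_cexp_mul_Ioo_le ha.le hc).trans ?_) (norm_nonneg _)
    (by positivity)
  rw [norm_mul, norm_I, one_mul]
  gcongr

lemma integral_norm_sum_sq {α ι : Type*} [MeasurableSpace α] {μ : Measure α} (s : Finset ι)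
    (u : ι → ℂ) {f : ι → α → ℂ} (hf : ∀ n m, Integrable (fun x => f n x * conj (f m x)) μ) :
    ∫ x, ‖∑ n ∈ s, u n * f n x‖ ^ 2 ∂μ =
      (∑ n ∈ s, ∑ m ∈ s, u n * conj (u m) * ∫ x, f n x * conj (f m x) ∂μ).re := by
  have hexpand : ∀ x, (‖∑ n ∈ s, u n * f n x‖ ^ 2 : ℂ) =
      ∑ n ∈ s, ∑ m ∈ s, u n * conj (u m) * (f n x * conj (f m x)) := by
    intro x
    rw [← mul_conj', map_sum, sum_mul_sum]
    refine sum_congr rfl fun n _ => sum_congr rfl fun m _ => ?_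
    rw [map_mul]; ring
  have hint : ∀ n m, Integrable (fun x => u n * conj (u m) * (f n x * conj (f m x))) μ :=
    fun n m => (hf n m).const_mul _
  calc ∫ x, ‖∑ n ∈ s, u n * f n x‖ ^ 2 ∂μ
      = (∫ x, (‖∑ n ∈ s, u n * f n x‖ ^ 2 : ℂ) ∂μ).re := by
        rw [← RCLike.re_eq_complex_re, ← integral_re]
        · norm_cast
        · simp_rw [hexpand]
          exact integrable_finsetSum _ fun n _ => integrable_finsetSum _ fun m _ => hint n m
    _ = _ := by
        simp_rw [hexpand]
        rw [integral_finsetSum _ fun n _ => integrable_finsetSum _ fun m _ => hint n m]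
        simp_rw [integral_finsetSum _ fun m _ => hint _ m, integral_const_mul]

section Schur

variable {ι : Type*} [DecidableEq ι] (s : Finset ι) (u : ι → ℂ) {G : ι → ι → ℂ} {ε : ℝ}

lemma sum_sum_erase_norm_mul_le (hsymm : ∀ n m, ‖G m n‖ = ‖G n m‖)
    (hrow : ∀ n ∈ s, ∑ m ∈ s.erase n, ‖G n m‖ ≤ ε) :
    ∑ n ∈ s, ∑ m ∈ s.erase n, ‖u n‖ * ‖u m‖ * ‖G n m‖ ≤ ε * ∑ n ∈ s, ‖u n‖ ^ 2 := by
  have hswap : ∑ n ∈ s, ∑ m ∈ s.erase n, ‖u m‖ ^ 2 * ‖G n m‖ =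
      ∑ n ∈ s, ∑ m ∈ s.erase n, ‖u n‖ ^ 2 * ‖G n m‖ := by
    rw [sum_comm' (t' := s) (s' := fun m => s.erase m)]
    · simp_rw [hsymm]
    · intro n m; simp only [mem_erase]; tauto
  calc ∑ n ∈ s, ∑ m ∈ s.erase n, ‖u n‖ * ‖u m‖ * ‖G n m‖
      ≤ ∑ n ∈ s, ∑ m ∈ s.erase n, (‖u n‖ ^ 2 + ‖u m‖ ^ 2) / 2 * ‖G n m‖ := by
        gcongr with n _ m _
        nlinarith [sq_nonneg (‖u n‖ - ‖u m‖)]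
    _ = ∑ n ∈ s, ‖u n‖ ^ 2 * ∑ m ∈ s.erase n, ‖G n m‖ := by
        simp_rw [add_div, add_mul, sum_add_distrib, div_mul_eq_mul_div, ← sum_div, hswap,
          mul_sum]
        ring
    _ ≤ ∑ n ∈ s, ‖u n‖ ^ 2 * ε := by gcongr with n hn; exact hrow n hn
    _ = ε * ∑ n ∈ s, ‖u n‖ ^ 2 := by rw [← sum_mul, mul_comm]

lemma abs_re_sum_sum_mul_sub_le (hdiag : ∀ n ∈ s, G n n = 1) (hsymm : ∀ n m, ‖G m n‖ = ‖G n m‖)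
    (hrow : ∀ n ∈ s, ∑ m ∈ s.erase n, ‖G n m‖ ≤ ε) :
    |(∑ n ∈ s, ∑ m ∈ s, u n * conj (u m) * G n m).re - ∑ n ∈ s, ‖u n‖ ^ 2| ≤
      ε * ∑ n ∈ s, ‖u n‖ ^ 2 := by
  have hsplit : ∑ n ∈ s, ∑ m ∈ s, u n * conj (u m) * G n m =
      ∑ n ∈ s, ∑ m ∈ s.erase n, u n * conj (u m) * G n m + ((∑ n ∈ s, ‖u n‖ ^ 2 : ℝ) : ℂ) := by
    push_cast
    rw [← sum_add_distrib]
    refine sum_congr rfl fun n hn => ?_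
    rw [← sum_erase_add _ _ hn, hdiag n hn, mul_one, mul_conj']
  rw [hsplit, add_re, ofReal_re, add_sub_cancel_right]
  refine (abs_re_le_norm _).trans ((norm_sum_le _ _).trans ?_)
  refine le_trans ?_ (sum_sum_erase_norm_mul_le s u hsymm hrow)
  gcongr with n
  refine (norm_sum_le _ _).trans_eq (sum_congr rfl fun m _ => ?_)
  rw [norm_mul, norm_mul, norm_conj]

end Schur

lemma sum_pow_le_of_injOn {ι : Type*} {x : ℝ} (hx0 : 0 ≤ x) (hx1 : x < 1) (t : Finset ι)
    {g : ι → ℕ} (hg : Set.InjOn g t) : ∑ i ∈ t, x ^ g i ≤ (1 - x)⁻¹ := by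
  rw [← sum_image hg, ← tsum_geometric_of_lt_one hx0 hx1]
  exact (summable_geometric_of_lt_one hx0 hx1).sum_le_tsum _ fun _ _ => pow_nonneg hx0 _

lemma sum_erase_pow_dist_le {x : ℝ} (hx0 : 0 ≤ x) (hx1 : x < 1) (s : Finset ℕ) (n : ℕ) :
    ∑ m ∈ s.erase n, x ^ n.dist m ≤ 2 * (1 - x)⁻¹ := by
  rw [← sum_filter_add_sum_filter_not _ (· < n), two_mul]
  gcongr <;> refine sum_pow_le_of_injOn hx0 hx1 _ fun m hm m' hm' h => ?_ <;>
    simp only [mem_coe, mem_filter, mem_erase, Nat.dist] at hm hm' h <;> omega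

section Lacunary

variable {q : ℝ}

lemma pow_mul_le_of_mul_le_succ {r : ℕ → ℝ} (hq : 0 ≤ q) (h : ∀ n, q * r n ≤ r (n + 1))
    (n k : ℕ) : q ^ k * r n ≤ r (n + k) := by
  induction k with
  | zero => simp
  | succ k ih =>
    calc q ^ (k + 1) * r n = q * (q ^ k * r n) := by ring
      _ ≤ q * r (n + k) := by gcongr
      _ ≤ r (n + (k + 1)) := h _

lemma tendsto_atTop_of_mul_lt_succ {r : ℕ → ℝ} (hq : 1 < q) (hr : ∀ n, 0 ≤ r n)
    (h : ∀ n, q * r n < r (n + 1)) : Tendsto r atTop atTop :=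
  (tendsto_add_atTop_iff_nat 1).mp <|
    tendsto_atTop_of_geom_le ((mul_nonneg (by linarith) (hr 0)).trans_lt (h 0)) hq
      fun n => (h (n + 1)).le

variable {lam : ℕ → ℂ} {N : ℕ}

lemma norm_sub_conj_ge_of_lt (hq : 1 ≤ q) (h : ∀ n, q * ‖lam n‖ ≤ ‖lam (n + 1)‖) {m n : ℕ}
    (hNm : N ≤ m) (hmn : m < n) :
    (1 - q⁻¹) * q ^ (n - m) * ‖lam N‖ ≤ ‖lam n - conj (lam m)‖ := by
  have hgrow := pow_mul_le_of_mul_le_succ (by linarith) h m (n - m)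
  rw [Nat.add_sub_cancel' hmn.le] at hgrow
  have hmono : ‖lam N‖ ≤ ‖lam m‖ :=
    monotone_nat_of_le_succ (fun k => (le_mul_of_one_le_left (norm_nonneg _) hq).trans (h k)) hNm
  have hpow : (1 - q⁻¹) * q ^ (n - m) ≤ q ^ (n - m) - 1 := by
    have : 1 ≤ q ^ (n - m) * q⁻¹ := by
      rw [← pow_sub_one_mul (by omega), mul_assoc, mul_inv_cancel₀ (by positivity), mul_one]
      exact one_le_pow₀ hq
    linarith
  calc (1 - q⁻¹) * q ^ (n - m) * ‖lam N‖ ≤ (q ^ (n - m) - 1) * ‖lam m‖ := by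
        gcongr
        linarith [one_le_pow₀ hq (n := n - m)]
    _ ≤ ‖lam n‖ - ‖conj (lam m)‖ := by rw [norm_conj]; linarith
    _ ≤ ‖lam n - conj (lam m)‖ := norm_sub_norm_le _ _

lemma norm_sub_conj_ge_of_ne (hq : 1 ≤ q) (h : ∀ n, q * ‖lam n‖ ≤ ‖lam (n + 1)‖) {m n : ℕ}
    (hNn : N ≤ n) (hNm : N ≤ m) (hnm : n ≠ m) :
    (1 - q⁻¹) * q ^ n.dist m * ‖lam N‖ ≤ ‖lam n - conj (lam m)‖ := by
  rcases hnm.lt_or_gt with hlt | hlt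
  · have hswap : ‖lam n - conj (lam m)‖ = ‖lam m - conj (lam n)‖ := by
      rw [← norm_conj, map_sub, conj_conj, norm_sub_rev]
    rw [hswap, Nat.dist_comm, Nat.dist, Nat.sub_eq_zero_of_le hlt.le, add_zero]
    exact norm_sub_conj_ge_of_lt hq h hNn hlt
  · rw [Nat.dist, Nat.sub_eq_zero_of_le hlt.le, add_zero]
    exact norm_sub_conj_ge_of_lt hq h hNm hlt

end Lacunary

lemma sum_erase_norm_expGram_le {a M q : ℝ} (ha : 0 < a) {lam : ℕ → ℂ}
    (hM : ∀ n, |(lam n).im| ≤ M) (hq : 1 < q) (hlac : ∀ n, q * ‖lam n‖ ≤ ‖lam (n + 1)‖) {N : ℕ}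
    (hN : 0 < ‖lam N‖) {s : Finset ℕ} (hs : ∀ n ∈ s, N ≤ n) {n : ℕ} (hn : n ∈ s) :
    ∑ m ∈ s.erase n, ‖expGram a (lam n) (lam m)‖ ≤
      2 * (Real.exp (2 * a * M) / a * (Real.exp (2 * a * M) + 1)) / ((1 - q⁻¹) ^ 2 * ‖lam N‖) := by
  set K := Real.exp (2 * a * M) / a * (Real.exp (2 * a * M) + 1)
  have hq₀ : 0 < q := by linarith
  have hq₁ : q⁻¹ < 1 := inv_lt_one_of_one_lt₀ hq
  have hq₂ : 0 < 1 - q⁻¹ := by linarith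
  have hentry : ∀ m ∈ s.erase n,
      ‖expGram a (lam n) (lam m)‖ ≤ K / ((1 - q⁻¹) * ‖lam N‖) * q⁻¹ ^ n.dist m := by
    intro m hm
    rw [mem_erase] at hm
    have hsep := norm_sub_conj_ge_of_ne hq.le hlac (hs n hn) (hs m hm.2) (Ne.symm hm.1)
    have hpos : 0 < (1 - q⁻¹) * q ^ n.dist m * ‖lam N‖ := by positivity
    calc ‖expGram a (lam n) (lam m)‖ ≤ K / ‖lam n - conj (lam m)‖ :=
          norm_expGram_le ha (hM n) (hM m) (norm_pos_iff.mp (hpos.trans_le hsep))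
      _ ≤ K / ((1 - q⁻¹) * q ^ n.dist m * ‖lam N‖) :=
          div_le_div_of_nonneg_left (by positivity) hpos hsep
      _ = K / ((1 - q⁻¹) * ‖lam N‖) * q⁻¹ ^ n.dist m := by
          rw [inv_pow]; field_simp
  calc ∑ m ∈ s.erase n, ‖expGram a (lam n) (lam m)‖
      ≤ ∑ m ∈ s.erase n, K / ((1 - q⁻¹) * ‖lam N‖) * q⁻¹ ^ n.dist m := sum_le_sum hentry
    _ = K / ((1 - q⁻¹) * ‖lam N‖) * ∑ m ∈ s.erase n, q⁻¹ ^ n.dist m := (mul_sum _ _ _).symm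
    _ ≤ K / ((1 - q⁻¹) * ‖lam N‖) * (2 * (1 - q⁻¹)⁻¹) := by
        gcongr
        exact sum_erase_pow_dist_le (by positivity) hq₁ s n
    _ = 2 * K / ((1 - q⁻¹) ^ 2 * ‖lam N‖) := by field_simp

/-- Lacunary sequences with bounded imaginary parts give asymptotically orthonormal
sequences of normalized exponentials `χ^a_{λ_n}(t) = normFac a λ_n · e^{iλ_n t}` in
`L²(0,a)`. -/
theorem stmt18 (lam : ℕ → ℂ)
    (hIm : ∃ M : ℝ, ∀ n, |(lam n).im| ≤ M)
    (q : ℝ) (hq : 1 < q)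
    (hlac : ∀ n, q * ‖lam n‖ < ‖lam (n + 1)‖)
    (a : ℝ) (ha : 0 < a) :
    ∃ (N₀ : ℕ) (c C : ℕ → ℝ),
      Tendsto c atTop (nhds 1) ∧ Tendsto C atTop (nhds 1) ∧
      ∀ N ≥ N₀, 0 < c N ∧ 0 < C N ∧
        ∀ (s : Finset ℕ) (u : ℕ → ℂ), (∀ n ∈ s, N ≤ n) →
          c N * ∑ n ∈ s, ‖u n‖ ^ 2 ≤
            (∫ t in Set.Ioo (0:ℝ) a,
              ‖∑ n ∈ s, u n * (normFac a (lam n) : ℂ) *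
                Complex.exp (Complex.I * lam n * t)‖ ^ 2) ∧
          (∫ t in Set.Ioo (0:ℝ) a,
              ‖∑ n ∈ s, u n * (normFac a (lam n) : ℂ) *
                Complex.exp (Complex.I * lam n * t)‖ ^ 2) ≤
            C N * ∑ n ∈ s, ‖u n‖ ^ 2 := by
  obtain ⟨M, hM⟩ := hIm
  set ε : ℕ → ℝ := fun N =>
    2 * (Real.exp (2 * a * M) / a * (Real.exp (2 * a * M) + 1)) / ((1 - q⁻¹) ^ 2 * ‖lam N‖)
  have hnorm : Tendsto (‖lam ·‖) atTop atTop :=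
    tendsto_atTop_of_mul_lt_succ hq (fun n => norm_nonneg _) hlac
  have hε : Tendsto ε atTop (nhds 0) :=
    tendsto_const_nhds.div_atTop (hnorm.const_mul_atTop (by nlinarith [inv_lt_one_of_one_lt₀ hq]))
  obtain ⟨N₀, hN₀⟩ := eventually_atTop.mp
    ((hnorm.eventually_gt_atTop 0).and (hε.eventually (gt_mem_nhds zero_lt_one)))
  refine ⟨N₀, fun N => 1 - ε N, fun N => 1 + ε N, by simpa using (tendsto_const_nhds.sub hε),
    by simpa using (tendsto_const_nhds.add hε), fun N hN => ?_⟩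
  obtain ⟨hN, hεN⟩ := hN₀ N hN
  have hε₀ : 0 ≤ ε N := by positivity
  refine ⟨by linarith, by linarith, fun s u hs => ?_⟩
  have hgram : |(∑ n ∈ s, ∑ m ∈ s, u n * conj (u m) * expGram a (lam n) (lam m)).re -
      ∑ n ∈ s, ‖u n‖ ^ 2| ≤ ε N * ∑ n ∈ s, ‖u n‖ ^ 2 :=
    abs_re_sum_sum_mul_sub_le s u (fun n _ => expGram_self ha (lam n))
      (fun n m => by rw [expGram_comm, norm_conj])
      (fun n hn => sum_erase_norm_expGram_le ha hM hq (fun n => (hlac n).le) hN hs hn)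
  have hintegral : ∫ t in Set.Ioo 0 a, ‖∑ n ∈ s, u n * normExp a (lam n) t‖ ^ 2 =
      (∑ n ∈ s, ∑ m ∈ s, u n * conj (u m) * expGram a (lam n) (lam m)).re :=
    integral_norm_sum_sq s u fun n m => integrableOn_normExp_mul_conj a (lam n) (lam m)
  simp only [normExp, ← mul_assoc] at hintegral
  rw [hintegral]
  constructor <;> linarith [abs_le.mp hgram]
end
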